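/- arXiv:2501.16639 — 3 statements merged into one kernel-verified Lean document; each statement's English description precedes it below -/
import Mathlib

section
/- Let positive semidefinite random matrix W (i.e., a random matrix that is positive semidefinite almost surely) and a fixed positive definite matrix M be given. Then the probability that W is not ≼ M (i.e., the complement of the event {M - W positive semidefinite}) is at most trace(E[W] · M⁻¹). -/
/-!
Conjugating by `R = M^{-1/2}` turns `W ≼ M` into `R W R ≼ 1`. A positive semidefinite matrix is
dominated by its trace times the identity, so `W ⋠ M` forces `tr (W M⁻¹) = tr (R W R) ≥ 1`.
The bad event is therefore contained in `{tr (W M⁻¹) ≥ 1}`, and the scalar Markov inequality for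
the nonnegative variable `tr (W M⁻¹)`, whose expectation is `tr (E[W] M⁻¹)`, gives the bound.
-/

open Matrix MeasureTheory
open scoped MatrixOrder ComplexOrder

namespace Matrix

section PosSemidef

variable {𝕜 n : Type*} [RCLike 𝕜] [Fintype n] [DecidableEq n]

theorem trace_mul_eq_trace_sqrt_mul_mul_sqrt (A : Matrix n n 𝕜) {B : Matrix n n 𝕜}
    (hB : B.PosSemidef) : (A * B).trace = (CFC.sqrt B * A * CFC.sqrt B).trace := by
  rw [trace_mul_cycle, CFC.sqrt_mul_sqrt_self B hB.nonneg, trace_mul_comm]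

theorem PosSemidef.sqrt_mul_mul_sqrt {A : Matrix n n 𝕜} (hA : A.PosSemidef) (B : Matrix n n 𝕜) :
    (CFC.sqrt B * A * CFC.sqrt B).PosSemidef :=
  (conjugate_nonneg_of_nonneg hA.nonneg (CFC.sqrt_nonneg B)).posSemidef

theorem PosSemidef.trace_mul_nonneg {A B : Matrix n n 𝕜} (hA : A.PosSemidef)
    (hB : B.PosSemidef) : 0 ≤ (A * B).trace := by
  rw [trace_mul_eq_trace_sqrt_mul_mul_sqrt A hB]
  exact (hA.sqrt_mul_mul_sqrt B).trace_nonneg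

theorem PosDef.sqrt_inv_mul_self_mul_sqrt_inv {M : Matrix n n 𝕜} (hM : M.PosDef) :
    CFC.sqrt M⁻¹ * M * CFC.sqrt M⁻¹ = 1 := by
  have := CFC.conjSqrt_ringInverse_self M hM.isStrictlyPositive
  rwa [CFC.conjSqrt_apply, ← nonsing_inv_eq_ringInverse] at this

theorem PosSemidef.le_trace_smul_one {B : Matrix n n 𝕜} (hB : B.PosSemidef) :
    B ≤ B.trace • 1 := by
  rw [hB.isHermitian.trace_eq_sum_eigenvalues, ← RCLike.ofReal_sum,
    ← RCLike.real_smul_eq_coe_smul, ← Algebra.algebraMap_eq_smul_one]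
  refine le_algebraMap_of_spectrum_le (fun x hx => ?_) hB.isHermitian
  obtain ⟨i, rfl⟩ := hB.isHermitian.spectrum_real_eq_range_eigenvalues ▸ hx
  exact Finset.single_le_sum (fun j _ => hB.eigenvalues_nonneg j) (Finset.mem_univ i)

theorem PosSemidef.one_le_trace_mul_inv_of_not_le {W M : Matrix n n ℝ} (hW : W.PosSemidef)
    (hM : M.PosDef) (hWM : ¬ W ≤ M) : 1 ≤ (W * M⁻¹).trace := by
  set R := CFC.sqrt M⁻¹
  have hRMR : R * M * R = 1 := hM.sqrt_inv_mul_self_mul_sqrt_inv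
  have hR : IsUnit R := .of_mul_eq_one (M * R) (by rw [← mul_assoc, hRMR])
  contrapose! hWM
  rw [← sub_nonneg, ← hR.star_left_conjugate_nonneg_iff,
    (CFC.sqrt_nonneg M⁻¹).isSelfAdjoint.star_eq, mul_sub, sub_mul, hRMR, sub_nonneg]
  calc R * W * R ≤ (R * W * R).trace • 1 := (hW.sqrt_mul_mul_sqrt _).le_trace_smul_one
    _ ≤ (1 : ℝ) • 1 := by
      rw [← trace_mul_eq_trace_sqrt_mul_mul_sqrt W hM.inv.posSemidef]
      exact smul_le_smul_of_nonneg_right hWM.le PosSemidef.one.nonneg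
    _ = 1 := one_smul ℝ 1

end PosSemidef

section Integral

variable {𝕜 n Ω : Type*} [RCLike 𝕜] [Fintype n] [MeasurableSpace Ω] {μ : Measure Ω}
  {W : Ω → Matrix n n 𝕜}

theorem integrable_trace_mul (hW : ∀ i j, Integrable (fun ω => W ω i j) μ) (A : Matrix n n 𝕜) :
    Integrable (fun ω => (W ω * A).trace) μ := by
  simp only [trace, diag, mul_apply]
  exact integrable_finsetSum _ fun i _ => integrable_finsetSum _ fun j _ => (hW i j).mul_const _

theorem integral_trace_mul (hW : ∀ i j, Integrable (fun ω => W ω i j) μ) (A : Matrix n n 𝕜) :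
    ∫ ω, (W ω * A).trace ∂μ = ((of fun i j => ∫ ω, W ω i j ∂μ) * A).trace := by
  simp only [trace, diag, mul_apply, of_apply]
  rw [integral_finsetSum _ fun i _ =>
    integrable_finsetSum _ fun j _ => (hW i j).mul_const _]
  refine Finset.sum_congr rfl fun i _ => ?_
  rw [integral_finsetSum _ fun j _ => (hW i j).mul_const _]
  exact Finset.sum_congr rfl fun j _ => integral_mul_const _ _

end Integral

end Matrix

theorem matrix_markov_inequality {k : ℕ} {Ω : Type*} [MeasurableSpace Ω]
    (μ : Measure Ω) [IsProbabilityMeasure μ]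
    (W : Ω → Matrix (Fin k) (Fin k) ℝ)
    (hpsd : ∀ᵐ ω ∂μ, (W ω).PosSemidef)
    (hint : ∀ i j, Integrable (fun ω => W ω i j) μ)
    (M : Matrix (Fin k) (Fin k) ℝ) (hM : M.PosDef) :
    (μ {ω | ¬ (M - W ω).PosSemidef}).toReal ≤
      Matrix.trace ((Matrix.of fun i j => ∫ ω, W ω i j ∂μ) * M⁻¹) := by
  have hnonneg : 0 ≤ᵐ[μ] fun ω => (W ω * M⁻¹).trace :=
    hpsd.mono fun ω hW => hW.trace_mul_nonneg hM.inv.posSemidef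
  have hsub : μ {ω | ¬ (M - W ω).PosSemidef} ≤ μ {ω | 1 ≤ (W ω * M⁻¹).trace} :=
    measure_mono_ae <| hpsd.mono fun ω hW hWM => hW.one_le_trace_mul_inv_of_not_le hM hWM
  calc (μ {ω | ¬ (M - W ω).PosSemidef}).toReal
      ≤ (μ {ω | 1 ≤ (W ω * M⁻¹).trace}).toReal := ENNReal.toReal_mono (measure_ne_top _ _) hsub
    _ ≤ ∫ ω, (W ω * M⁻¹).trace ∂μ := by
      simpa only [one_mul, measureReal_def] using
        mul_meas_ge_le_integral_of_nonneg hnonneg (integrable_trace_mul hint M⁻¹) 1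
    _ = _ := integral_trace_mul hint M⁻¹
end

section
/- Weyl's inequality for Hermitian matrices: Let M₁, M₂ be n×n Hermitian matrices with eigenvalues listed in descending order λ₁ ≥ λ₂ ≥ ⋯ ≥ λ_n. Then for indices i, j with i + j − 1 ≤ n, λ_{i+j−1}(M₁ + M₂) ≤ λ_i(M₁) + λ_j(M₂). -/
open Matrix

/-- The `k`-th largest entry (0-indexed) of a finite tuple of reals. -/
noncomputable def kthLargest {m : ℕ} (v : Fin m → ℝ) (k : Fin m) : ℝ :=
  (v ∘ Tuple.sort v) ⟨m - 1 - (k : ℕ), by omega⟩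

/-!
The Courant–Fischer argument. The eigenvectors of `M₁` whose eigenvalues are at most `λ_i(M₁)`
span a subspace of dimension `n - i + 1` on which `re ⟪x, M₁ x⟫ ≤ λ_i(M₁) ‖x‖²`; likewise for `M₂`
with dimension `n - j + 1`. The eigenvectors of `M₁ + M₂` whose eigenvalues are at least
`λ_{i+j-1}(M₁ + M₂)` span a subspace of dimension `i + j - 1` on which the reverse bound holds.
These dimensions add up to `2n + 1`, so the three subspaces share a nonzero vector `x`, and the
inequality follows by comparing the three quadratic forms at `x`.
-/

open Module Submodule
open scoped InnerProductSpace

namespace Submodule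

variable {K V : Type*} [DivisionRing K] [AddCommGroup V] [Module K V] [FiniteDimensional K V]

theorem finrank_add_finrank_le_finrank_inf_add (U W : Submodule K V) :
    finrank K U + finrank K W ≤ finrank K ↥(U ⊓ W) + finrank K V := by
  rw [← finrank_sup_add_finrank_inf_eq, add_comm]
  gcongr
  exact finrank_le _

theorem exists_ne_zero_mem_inf_inf (U W X : Submodule K V)
    (h : 2 * finrank K V < finrank K U + finrank K W + finrank K X) :
    ∃ x ≠ 0, x ∈ U ∧ x ∈ W ∧ x ∈ X := by
  have hUW := finrank_add_finrank_le_finrank_inf_add U W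
  have hnd : ¬Disjoint (U ⊓ W) X := fun hd ↦ by
    have := finrank_add_finrank_le_of_disjoint hd
    omega
  simp only [disjoint_def, not_forall] at hnd
  obtain ⟨x, ⟨hxU, hxW⟩, hxX, hx⟩ := hnd
  exact ⟨x, hx, hxU, hxW, hxX⟩

end Submodule

namespace OrthonormalBasis

variable {ι 𝕜 E : Type*} [Fintype ι] [RCLike 𝕜] [NormedAddCommGroup E] [InnerProductSpace 𝕜 E]
  (b : OrthonormalBasis ι 𝕜 E)

theorem repr_eq_zero_of_mem_span_image {S : Set ι} {x : E} (hx : x ∈ span 𝕜 (b '' S)) {k : ι}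
    (hk : k ∉ S) : b.repr x k = 0 := by
  rw [← b.coe_toBasis, b.toBasis.mem_span_image] at hx
  simpa using fun h ↦ hk (hx (Finsupp.mem_support_iff.mpr h))

theorem finrank_span_image (S : Finset ι) : finrank 𝕜 (span 𝕜 (b '' S)) = S.card := by
  rw [Set.image_eq_range]
  exact (finrank_span_eq_card (b.orthonormal.linearIndependent.comp _ Subtype.val_injective)).trans
    (Fintype.card_coe S)

variable {b} {T : E →ₗ[𝕜] E} {μ : ι → ℝ}

theorem repr_apply_of_apply_eq_smul (hT : T.IsSymmetric) (hb : ∀ k, T (b k) = (μ k : 𝕜) • b k)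
    (x : E) (k : ι) : b.repr (T x) k = μ k * b.repr x k := by
  rw [b.repr_apply_apply, b.repr_apply_apply, ← hT, hb, inner_smul_left, RCLike.conj_ofReal]

theorem re_inner_apply_self_eq_sum (hT : T.IsSymmetric) (hb : ∀ k, T (b k) = (μ k : 𝕜) • b k)
    (x : E) : RCLike.re ⟪x, T x⟫_𝕜 = ∑ k, μ k * ‖b.repr x k‖ ^ 2 := by
  rw [← b.sum_inner_mul_inner, map_sum]
  refine Finset.sum_congr rfl fun k _ ↦ ?_
  rw [← b.repr_apply_apply, repr_apply_of_apply_eq_smul hT hb, ← inner_conj_symm,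
    ← b.repr_apply_apply, mul_left_comm, RCLike.conj_mul]
  norm_cast

theorem re_inner_apply_self_le_of_mem_span_image (hT : T.IsSymmetric)
    (hb : ∀ k, T (b k) = (μ k : 𝕜) • b k) {S : Set ι} {c : ℝ} (hS : ∀ k ∈ S, μ k ≤ c) {x : E}
    (hx : x ∈ span 𝕜 (b '' S)) : RCLike.re ⟪x, T x⟫_𝕜 ≤ c * ‖x‖ ^ 2 := by
  rw [re_inner_apply_self_eq_sum hT hb, ← b.repr.norm_map, EuclideanSpace.norm_sq_eq,
    Finset.mul_sum]
  refine Finset.sum_le_sum fun k _ ↦ ?_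
  by_cases hk : k ∈ S
  · gcongr; exact hS k hk
  · simp [b.repr_eq_zero_of_mem_span_image hx hk]

theorem le_re_inner_apply_self_of_mem_span_image (hT : T.IsSymmetric)
    (hb : ∀ k, T (b k) = (μ k : 𝕜) • b k) {S : Set ι} {c : ℝ} (hS : ∀ k ∈ S, c ≤ μ k) {x : E}
    (hx : x ∈ span 𝕜 (b '' S)) : c * ‖x‖ ^ 2 ≤ RCLike.re ⟪x, T x⟫_𝕜 := by
  rw [re_inner_apply_self_eq_sum hT hb, ← b.repr.norm_map, EuclideanSpace.norm_sq_eq,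
    Finset.mul_sum]
  refine Finset.sum_le_sum fun k _ ↦ ?_
  by_cases hk : k ∈ S
  · gcongr; exact hS k hk
  · simp [b.repr_eq_zero_of_mem_span_image hx hk]

end OrthonormalBasis

section kthLargest

variable {m : ℕ} (v : Fin m → ℝ) (k : Fin m)

theorem exists_card_eq_forall_le_kthLargest :
    ∃ S : Finset (Fin m), S.card = m - k ∧ ∀ a ∈ S, v a ≤ kthLargest v k := by
  refine ⟨(Finset.Iic ⟨m - 1 - k, by omega⟩).map (Tuple.sort v).toEmbedding, ?_, ?_⟩
  · simp only [Finset.card_map, Fin.card_Iic]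
    omega
  · intro a ha
    obtain ⟨p, hp, rfl⟩ := Finset.mem_map.mp ha
    exact Tuple.monotone_sort v (Finset.mem_Iic.mp hp)

theorem exists_card_eq_forall_kthLargest_le :
    ∃ S : Finset (Fin m), S.card = k + 1 ∧ ∀ a ∈ S, kthLargest v k ≤ v a := by
  refine ⟨(Finset.Ici ⟨m - 1 - k, by omega⟩).map (Tuple.sort v).toEmbedding, ?_, ?_⟩
  · simp only [Finset.card_map, Fin.card_Ici]
    omega
  · intro a ha
    obtain ⟨p, hp, rfl⟩ := Finset.mem_map.mp ha
    exact Tuple.monotone_sort v (Finset.mem_Ici.mp hp)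

end kthLargest

namespace Matrix.IsHermitian

variable {𝕜 : Type*} [RCLike 𝕜] {n : ℕ} {A : Matrix (Fin n) (Fin n) 𝕜} (hA : A.IsHermitian)

theorem toEuclideanLin_eigenvectorBasis (k : Fin n) :
    toEuclideanLin A (hA.eigenvectorBasis k) = (hA.eigenvalues k : 𝕜) • hA.eigenvectorBasis k := by
  rw [toLpLin_apply, hA.mulVec_eigenvectorBasis, RCLike.real_smul_eq_coe_smul (K := 𝕜)]
  rfl

theorem exists_finrank_eq_forall_re_inner_le_kthLargest (k : Fin n) :
    ∃ V : Submodule 𝕜 (EuclideanSpace 𝕜 (Fin n)), finrank 𝕜 V = n - k ∧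
      ∀ x ∈ V, RCLike.re ⟪x, toEuclideanLin A x⟫_𝕜 ≤ kthLargest hA.eigenvalues k * ‖x‖ ^ 2 := by
  obtain ⟨S, hS, hle⟩ := exists_card_eq_forall_le_kthLargest hA.eigenvalues k
  exact ⟨span 𝕜 (hA.eigenvectorBasis '' S), by rw [OrthonormalBasis.finrank_span_image, hS],
    fun _ ↦ OrthonormalBasis.re_inner_apply_self_le_of_mem_span_image
      (isSymmetric_toEuclideanLin_iff.mpr hA) hA.toEuclideanLin_eigenvectorBasis hle⟩

theorem exists_finrank_eq_forall_kthLargest_le_re_inner (k : Fin n) :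
    ∃ V : Submodule 𝕜 (EuclideanSpace 𝕜 (Fin n)), finrank 𝕜 V = k + 1 ∧
      ∀ x ∈ V, kthLargest hA.eigenvalues k * ‖x‖ ^ 2 ≤ RCLike.re ⟪x, toEuclideanLin A x⟫_𝕜 := by
  obtain ⟨S, hS, hge⟩ := exists_card_eq_forall_kthLargest_le hA.eigenvalues k
  exact ⟨span 𝕜 (hA.eigenvectorBasis '' S), by rw [OrthonormalBasis.finrank_span_image, hS],
    fun _ ↦ OrthonormalBasis.le_re_inner_apply_self_of_mem_span_image
      (isSymmetric_toEuclideanLin_iff.mpr hA) hA.toEuclideanLin_eigenvectorBasis hge⟩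

end Matrix.IsHermitian

theorem weyl_inequality {n : ℕ} (M₁ M₂ : Matrix (Fin n) (Fin n) ℂ)
    (h₁ : M₁.IsHermitian) (h₂ : M₂.IsHermitian)
    (i j : ℕ) (hi : 1 ≤ i) (hj : 1 ≤ j) (hij : i + j - 1 ≤ n) :
    kthLargest (h₁.add h₂).eigenvalues ⟨i + j - 2, by omega⟩ ≤
      kthLargest h₁.eigenvalues ⟨i - 1, by omega⟩ +
        kthLargest h₂.eigenvalues ⟨j - 1, by omega⟩ := by
  obtain ⟨V₁, hV₁, hle₁⟩ := h₁.exists_finrank_eq_forall_re_inner_le_kthLargest ⟨i - 1, by omega⟩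
  obtain ⟨V₂, hV₂, hle₂⟩ := h₂.exists_finrank_eq_forall_re_inner_le_kthLargest ⟨j - 1, by omega⟩
  obtain ⟨V₃, hV₃, hge₃⟩ :=
    (h₁.add h₂).exists_finrank_eq_forall_kthLargest_le_re_inner ⟨i + j - 2, by omega⟩
  obtain ⟨x, hx, hx₁, hx₂, hx₃⟩ := V₁.exists_ne_zero_mem_inf_inf V₂ V₃ (by
    simp only [finrank_euclideanSpace_fin, hV₁, hV₂, hV₃]
    omega)
  refine le_of_mul_le_mul_right ?_ (by positivity : 0 < ‖x‖ ^ 2)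
  calc _ ≤ RCLike.re ⟪x, toEuclideanLin (M₁ + M₂) x⟫_ℂ := hge₃ x hx₃
    _ = RCLike.re ⟪x, toEuclideanLin M₁ x⟫_ℂ + RCLike.re ⟪x, toEuclideanLin M₂ x⟫_ℂ := by
      rw [map_add, LinearMap.add_apply, inner_add_right, map_add]
    _ ≤ _ := by
      rw [add_mul]
      exact add_le_add (hle₁ x hx₁) (hle₂ x hx₂)
end

section
/- Wedin's pseudo-inverse perturbation bound: for matrices M₁, M₂ ∈ ℝ^{m×n} both of full row rank m (with m ≤ n), ‖M₁† − M₂†‖ ≤ √2 · ‖M₁†‖ · ‖M₂†‖ · ‖M₁ − M₂‖. -/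
open Matrix

/-- The spectral norm (operator norm induced by the Euclidean norm) of a real matrix. -/
noncomputable def specNorm {m n : Type*} [Fintype m] [Fintype n] [DecidableEq n]
    (A : Matrix m n ℝ) : ℝ :=
  ‖(Matrix.toEuclideanLin A).toContinuousLinearMap‖

/-- Moore–Penrose pseudo-inverse of a full row rank matrix. -/
noncomputable def pinv {m n : ℕ} (A : Matrix (Fin m) (Fin n) ℝ) :
    Matrix (Fin n) (Fin m) ℝ :=
  Aᵀ * (A * Aᵀ)⁻¹

namespace WedinAux

open scoped Matrix.Norms.L2Operator

variable {m n : ℕ}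

lemma conjT_eq {k l : Type*} (A : Matrix k l ℝ) : Aᴴ = Aᵀ := by
  ext i j; simp [conjTranspose]

lemma specNorm_eq {k l : Type*} [Fintype k] [Fintype l] [DecidableEq l]
    (A : Matrix k l ℝ) : specNorm A = ‖A‖ := rfl

lemma norm_transpose {k l : Type*} [Fintype k] [Fintype l] [DecidableEq k] [DecidableEq l]
    (A : Matrix k l ℝ) : ‖Aᵀ‖ = ‖A‖ := by
  rw [← conjT_eq, Matrix.l2_opNorm_conjTranspose]

lemma isUnit_mul_transpose (M : Matrix (Fin m) (Fin n) ℝ) (h : M.rank = m) :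
    IsUnit (M * Mᵀ) := by
  rw [← Matrix.mulVec_surjective_iff_isUnit]
  have hr : (M * Mᵀ).rank = m := by rw [Matrix.rank_self_mul_transpose, h]
  have htop : LinearMap.range (M * Mᵀ).mulVecLin = ⊤ := by
    apply Submodule.eq_top_of_finrank_eq
    rw [show Module.finrank ℝ ↥(LinearMap.range (M * Mᵀ).mulVecLin) = (M * Mᵀ).rank from rfl, hr,
      Module.finrank_fintype_fun_eq_card, Fintype.card_fin]
  intro y
  obtain ⟨x, hx⟩ := LinearMap.range_eq_top.mp htop y
  exact ⟨x, hx⟩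

lemma isUnit_det_mul_transpose (M : Matrix (Fin m) (Fin n) ℝ) (h : M.rank = m) :
    IsUnit (M * Mᵀ).det :=
  (Matrix.isUnit_iff_isUnit_det _).mp (isUnit_mul_transpose M h)

lemma mul_pinv (M : Matrix (Fin m) (Fin n) ℝ) (h : M.rank = m) : M * pinv M = 1 := by
  rw [pinv, ← Matrix.mul_assoc, Matrix.mul_nonsing_inv _ (isUnit_det_mul_transpose M h)]

lemma inv_gram_symm (M : Matrix (Fin m) (Fin n) ℝ) :
    ((M * Mᵀ)⁻¹)ᵀ = (M * Mᵀ)⁻¹ := by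
  rw [Matrix.transpose_nonsing_inv, Matrix.transpose_mul, Matrix.transpose_transpose]

lemma pinv_transpose (M : Matrix (Fin m) (Fin n) ℝ) :
    (pinv M)ᵀ = (M * Mᵀ)⁻¹ * M := by
  rw [pinv, Matrix.transpose_mul, Matrix.transpose_transpose, inv_gram_symm]

lemma norm_le_one_of_proj (Q : Matrix (Fin n) (Fin n) ℝ) (hsym : Qᵀ = Q)
    (hid : Q * Q = Q) : ‖Q‖ ≤ 1 := by
  have h1 : ‖Q‖ * ‖Q‖ = ‖Q‖ := by
    rw [← Matrix.l2_opNorm_conjTranspose_mul_self, conjT_eq, hsym, hid]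
  nlinarith [norm_nonneg Q]

set_option maxHeartbeats 1000000 in
lemma key (A B : Matrix (Fin m) (Fin n) ℝ) (hA : A.rank = m) (hB : B.rank = m)
    (hle : ‖pinv A‖ ≤ ‖pinv B‖) :
    ‖pinv B - pinv A‖ ≤ Real.sqrt 2 * ‖pinv B‖ * ‖pinv A‖ * ‖B - A‖ := by
  set a := pinv A with ha
  set b := pinv B with hb
  have hAa : A * a = 1 := mul_pinv A hA
  have hBb : B * b = 1 := mul_pinv B hB
  set P : Matrix (Fin n) (Fin n) ℝ := b * B with hP
  set Q : Matrix (Fin n) (Fin n) ℝ := 1 - P with hQ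
  set D : Matrix (Fin n) (Fin m) ℝ := b - a with hD
  set E : Matrix (Fin m) (Fin n) ℝ := B - A with hE
  have hPsym : Pᵀ = P := by
    rw [hP, Matrix.transpose_mul, pinv_transpose, hb, pinv, Matrix.mul_assoc]
  have hPP : P * P = P := by
    rw [hP, Matrix.mul_assoc, ← Matrix.mul_assoc B b B, hBb, Matrix.one_mul]
  have hQsym : Qᵀ = Q := by
    rw [hQ, Matrix.transpose_sub, Matrix.transpose_one, hPsym]
  have hQQ : Q * Q = Q := by
    simp only [hQ, Matrix.sub_mul, Matrix.mul_sub, hPP, Matrix.one_mul, Matrix.mul_one]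
    abel
  have hPD : P * D = -(b * (E * a)) := by
    simp only [hP, hD, hE, Matrix.mul_sub, Matrix.sub_mul, Matrix.mul_assoc, hBb, hAa,
      Matrix.mul_one]
    abel
  have hQb : Q * b = 0 := by
    simp only [hQ, hP, Matrix.sub_mul, Matrix.one_mul, Matrix.mul_assoc, hBb, Matrix.mul_one,
      sub_self]
  have hQBt : Q * Bᵀ = 0 := by
    have h := Matrix.nonsing_inv_mul (B * Bᵀ) (isUnit_det_mul_transpose B hB)
    simp only [hQ, hP, hb, pinv, Matrix.sub_mul, Matrix.one_mul, Matrix.mul_assoc, h,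
      Matrix.mul_one, sub_self]
  have haA : Aᵀ * aᵀ = a * A := by
    rw [ha, pinv_transpose, pinv]
    simp only [Matrix.mul_assoc]
  have haa : Aᵀ * (aᵀ * a) = a := by
    rw [← Matrix.mul_assoc, haA, Matrix.mul_assoc, hAa, Matrix.mul_one]
  have hAt : Aᵀ = Bᵀ - Eᵀ := by
    rw [hE, Matrix.transpose_sub]; abel
  have hQD : Q * D = Q * (Eᵀ * (aᵀ * a)) := by
    have h1 : Q * a = -(Q * (Eᵀ * (aᵀ * a))) := by
      calc Q * a = Q * (Aᵀ * (aᵀ * a)) := by rw [haa]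
        _ = Q * ((Bᵀ - Eᵀ) * (aᵀ * a)) := by rw [hAt]
        _ = Q * (Bᵀ * (aᵀ * a)) - Q * (Eᵀ * (aᵀ * a)) := by
            rw [Matrix.sub_mul Bᵀ Eᵀ, Matrix.mul_sub Q]
        _ = -(Q * (Eᵀ * (aᵀ * a))) := by
            rw [← Matrix.mul_assoc Q Bᵀ, hQBt, Matrix.zero_mul, zero_sub]
    rw [hD, Matrix.mul_sub, hQb, h1]
    abel
  have e1 : P * (P * D) = P * D := by rw [← Matrix.mul_assoc, hPP]
  have e2 : Q * (Q * D) = Q * D := by rw [← Matrix.mul_assoc, hQQ]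
  have e3 : P * D + Q * D = D := by
    rw [← Matrix.add_mul]
    simp [hQ]
  have hsplit : Dᵀ * D = (P * D)ᵀ * (P * D) + (Q * D)ᵀ * (Q * D) := by
    simp only [Matrix.transpose_mul, hPsym, hQsym, Matrix.mul_assoc, e1, e2]
    rw [← Matrix.mul_add, e3]
  -- norm bounds
  have hQn : ‖Q‖ ≤ 1 := norm_le_one_of_proj Q hQsym hQQ
  have hPDn : ‖P * D‖ ≤ ‖b‖ * ‖E‖ * ‖a‖ := by
    rw [hPD, norm_neg]
    calc ‖b * (E * a)‖ ≤ ‖b‖ * ‖E * a‖ := Matrix.l2_opNorm_mul _ _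
      _ ≤ ‖b‖ * (‖E‖ * ‖a‖) :=
        mul_le_mul_of_nonneg_left (Matrix.l2_opNorm_mul _ _) (norm_nonneg _)
      _ = ‖b‖ * ‖E‖ * ‖a‖ := by ring
  have hQDn : ‖Q * D‖ ≤ ‖E‖ * (‖a‖ * ‖a‖) := by
    rw [hQD]
    calc ‖Q * (Eᵀ * (aᵀ * a))‖ ≤ ‖Q‖ * ‖Eᵀ * (aᵀ * a)‖ := Matrix.l2_opNorm_mul _ _
      _ ≤ 1 * ‖Eᵀ * (aᵀ * a)‖ := mul_le_mul_of_nonneg_right hQn (norm_nonneg _)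
      _ = ‖Eᵀ * (aᵀ * a)‖ := one_mul _
      _ ≤ ‖Eᵀ‖ * ‖aᵀ * a‖ := Matrix.l2_opNorm_mul _ _
      _ ≤ ‖Eᵀ‖ * (‖aᵀ‖ * ‖a‖) :=
        mul_le_mul_of_nonneg_left (Matrix.l2_opNorm_mul _ _) (norm_nonneg _)
      _ = ‖E‖ * (‖a‖ * ‖a‖) := by rw [norm_transpose, norm_transpose]
  have hCD : ‖Dᵀ * D‖ = ‖D‖ * ‖D‖ := by
    rw [← conjT_eq, Matrix.l2_opNorm_conjTranspose_mul_self]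
  have hCP : ‖(P * D)ᵀ * (P * D)‖ = ‖P * D‖ * ‖P * D‖ := by
    rw [← conjT_eq, Matrix.l2_opNorm_conjTranspose_mul_self]
  have hCQ : ‖(Q * D)ᵀ * (Q * D)‖ = ‖Q * D‖ * ‖Q * D‖ := by
    rw [← conjT_eq, Matrix.l2_opNorm_conjTranspose_mul_self]
  have hDD : ‖D‖ * ‖D‖ ≤ ‖P * D‖ * ‖P * D‖ + ‖Q * D‖ * ‖Q * D‖ := by
    rw [← hCD, ← hCP, ← hCQ, hsplit]
    exact norm_add_le _ _
  have h1 : ‖P * D‖ * ‖P * D‖ ≤ (‖b‖ * ‖E‖ * ‖a‖) * (‖b‖ * ‖E‖ * ‖a‖) :=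
    mul_le_mul hPDn hPDn (norm_nonneg _) (by positivity)
  have h2 : ‖Q * D‖ * ‖Q * D‖ ≤ (‖E‖ * (‖a‖ * ‖a‖)) * (‖E‖ * (‖a‖ * ‖a‖)) :=
    mul_le_mul hQDn hQDn (norm_nonneg _) (by positivity)
  have hab : ‖a‖ * ‖a‖ ≤ ‖b‖ * ‖b‖ := mul_le_mul hle hle (norm_nonneg _) (norm_nonneg _)
  have hc : (0:ℝ) ≤ ‖E‖ * ‖E‖ * (‖a‖ * ‖a‖) := by positivity
  have h3 := mul_le_mul_of_nonneg_left hab hc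
  have hsq : ‖D‖ ^ 2 ≤ 2 * (‖b‖ * ‖a‖ * ‖E‖) ^ 2 := by
    nlinarith [h1, h2, h3, hDD]
  have c0 : (0 : ℝ) ≤ ‖b‖ * ‖a‖ * ‖E‖ := by positivity
  calc ‖D‖ = Real.sqrt (‖D‖ ^ 2) := (Real.sqrt_sq (norm_nonneg D)).symm
    _ ≤ Real.sqrt (2 * (‖b‖ * ‖a‖ * ‖E‖) ^ 2) := Real.sqrt_le_sqrt hsq
    _ = Real.sqrt 2 * (‖b‖ * ‖a‖ * ‖E‖) := by
        rw [Real.sqrt_mul (by norm_num), Real.sqrt_sq c0]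
    _ = Real.sqrt 2 * ‖b‖ * ‖a‖ * ‖E‖ := by ring

end WedinAux

theorem wedin_pseudo_inverse_perturbation {m n : ℕ} (hmn : m ≤ n)
    (M₁ M₂ : Matrix (Fin m) (Fin n) ℝ)
    (h₁ : M₁.rank = m) (h₂ : M₂.rank = m) :
    specNorm (pinv M₁ - pinv M₂) ≤
      Real.sqrt 2 * specNorm (pinv M₁) * specNorm (pinv M₂) * specNorm (M₁ - M₂) := by
  open scoped Matrix.Norms.L2Operator in
  simp only [WedinAux.specNorm_eq]
  rcases le_total ‖pinv M₂‖ ‖pinv M₁‖ with h | h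
  · exact WedinAux.key M₂ M₁ h₂ h₁ h
  · have := WedinAux.key M₁ M₂ h₁ h₂ h
    rw [norm_sub_rev (pinv M₁), norm_sub_rev M₁]
    linarith [this]
end
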